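/- arXiv:2501.12480 — 3 statements merged into one kernel-verified Lean document; each statement's English description precedes it below -/
import Mathlib

section
/- (Event identity, two-point case with a < 0) Let a < 0 < b, let z ∈ (f(q), 1), and let t_z ∈ (0,1) be the unique solution of f(t) = z. Then for every n ≥ 1 the events A_n(z) and {N_n ≥ t_z·n} coincide (as subsets of the sample space). -/
open MeasureTheory ProbabilityTheory Real Set
open scoped ENNReal Classical

/-- The function `f(t) = (a + t(b−a)) / (|a|^p + t(b^p − |a|^p))^{1/p}`. -/
noncomputable def crossFn (p a b t : ℝ) : ℝ :=
  (a + t * (b - a)) / (|a| ^ p + t * (b ^ p - |a| ^ p)) ^ (1 / p)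

/-! Every `X_j` equals `a` or `b`, so `S_n` and `T_n` depend on `ω` only through `N_n`: they are
`n` times the numerator and the `p`-th power of the denominator of `f` at `N_n / n`. By
homogeneity `A_n(z)` is therefore the event `z ≤ f(N_n / n)`. The function `f` is continuous
on `[0, 1]` with `f 0 = -1 < z < 1 = f 1` and takes the value `z` on `(0, 1)` only at `t_z`, so
by the intermediate value theorem `z ≤ f t` holds exactly for `t ≥ t_z`. -/

section Crossing

variable {f : ℝ → ℝ} {u v z c t : ℝ}

lemma le_apply_iff_le_of_unique_crossing (hf : ContinuousOn f (Icc u v)) (hu : f u < z)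
    (hv : z < f v) (hc : c ∈ Ioo u v)
    (huniq : ∀ s ∈ Ioo u v, f s = z → s = c) (ht : t ∈ Icc u v) :
    z ≤ f t ↔ c ≤ t := by
  obtain ⟨hut, htv⟩ := ht
  constructor
  · intro hzt
    by_contra! htc
    obtain ⟨s, ⟨hus, hst⟩, hfs⟩ :=
      intermediate_value_Ioc hut (hf.mono (Icc_subset_Icc le_rfl htv)) ⟨hu, hzt⟩
    have := huniq s ⟨hus, by linarith [hc.2]⟩ hfs
    linarith
  · intro hct
    by_contra! hft
    obtain ⟨s, ⟨hts, hsv⟩, hfs⟩ :=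
      intermediate_value_Ioo htv (hf.mono (Icc_subset_Icc hut le_rfl)) ⟨hft, hv⟩
    have := huniq s ⟨by linarith [hc.1], hsv⟩ hfs
    linarith

end Crossing

section CrossFn

variable {p a b t : ℝ}

lemma crossFn_denom_pos (ha : a ≠ 0) (hb : 0 < b) (ht : t ∈ Icc (0 : ℝ) 1) :
    0 < |a| ^ p + t * (b ^ p - |a| ^ p) := by
  have hA : 0 < |a| ^ p := rpow_pos_of_pos (abs_pos.mpr ha) p
  have hB : 0 < b ^ p := rpow_pos_of_pos hb p
  nlinarith [mul_nonneg ht.1 hB.le, mul_nonneg (sub_nonneg.mpr ht.2) hA.le]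

lemma continuousOn_crossFn (ha : a ≠ 0) (hb : 0 < b) :
    ContinuousOn (crossFn p a b) (Icc 0 1) := by
  refine ContinuousOn.div (by fun_prop) ?_ fun t ht ↦
    (rpow_pos_of_pos (crossFn_denom_pos ha hb ht) _).ne'
  exact ContinuousOn.rpow_const (by fun_prop) fun t ht ↦
    Or.inl (crossFn_denom_pos ha hb ht).ne'

lemma crossFn_zero (ha : a < 0) (hp : p ≠ 0) : crossFn p a b 0 = -1 := by
  rw [crossFn, zero_mul, zero_mul, add_zero, add_zero, one_div, rpow_rpow_inv (abs_nonneg a) hp,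
    abs_of_neg ha, div_neg, div_self ha.ne]

lemma crossFn_one (hb : 0 < b) (hp : p ≠ 0) : crossFn p a b 1 = 1 := by
  rw [crossFn, one_mul, one_mul, add_sub_cancel, add_sub_cancel, one_div, rpow_rpow_inv hb.le hp,
    div_self hb.ne']

/-- For `t > 0` the numerator exceeds `-(1 - t)|a|`, while
`(1 - t)|a| ≤ ((1 - t)|a|^p)^{1/p}` because `(1 - t)^p ≤ 1 - t` for `p ≥ 1`. -/
lemma neg_one_lt_crossFn (ha : a < 0) (hb : 0 < b) (hp : 1 ≤ p) (ht : t ∈ Ioo (0 : ℝ) 1) :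
    -1 < crossFn p a b t := by
  obtain ⟨ht0, ht1⟩ := ht
  set D := |a| ^ p + t * (b ^ p - |a| ^ p)
  have hD : 0 < D ^ (1 / p) := rpow_pos_of_pos (crossFn_denom_pos ha.ne hb ⟨ht0.le, ht1.le⟩) _
  have hpow : ((1 - t) * |a|) ^ p ≤ D := by
    have hs : (1 - t) ^ p ≤ 1 - t := rpow_le_self_of_le_one (by linarith) (by linarith) hp
    have hB : 0 ≤ b ^ p := rpow_nonneg hb.le p
    rw [mul_rpow (by linarith) (abs_nonneg a)]
    nlinarith [rpow_nonneg (abs_nonneg a) p, mul_nonneg ht0.le hB]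
  have hroot : (1 - t) * |a| ≤ D ^ (1 / p) := by
    have hnn : 0 ≤ (1 - t) * |a| := mul_nonneg (by linarith) (abs_nonneg a)
    calc (1 - t) * |a| = (((1 - t) * |a|) ^ p) ^ (1 / p) := by
          rw [one_div, rpow_rpow_inv hnn (by linarith)]
      _ ≤ D ^ (1 / p) := rpow_le_rpow (rpow_nonneg hnn p) hpow (by positivity)
  rw [abs_of_neg ha] at hroot
  rw [crossFn, lt_div_iff₀ hD]
  nlinarith [mul_pos ht0 hb]

end CrossFn

lemma le_crossFn_iff {p a b z tz t : ℝ} (ha : a < 0) (hb : 0 < b) (hp : 1 ≤ p) (hz : z < 1)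
    (htz : tz ∈ Ioo (0 : ℝ) 1) (hftz : crossFn p a b tz = z)
    (huniq : ∀ s ∈ Ioo (0 : ℝ) 1, crossFn p a b s = z → s = tz) (ht : t ∈ Icc (0 : ℝ) 1) :
    z ≤ crossFn p a b t ↔ tz ≤ t := by
  have hp0 : p ≠ 0 := by positivity
  refine le_apply_iff_le_of_unique_crossing (continuousOn_crossFn ha.ne hb) ?_ ?_ htz huniq ht
  · rw [crossFn_zero ha hp0, ← hftz]
    exact neg_one_lt_crossFn ha hb hp htz
  · rwa [crossFn_one hb hp0]

open Finset in
lemma sum_comp_eq_of_two_valued {ι α R : Type*} [Ring R] (s : Finset ι) (x : ι → α) (g : α → R)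
    {a b : α} (hx : ∀ j ∈ s, x j = a ∨ x j = b) :
    ∑ j ∈ s, g (x j) = #(s.filter (x · = b)) * g b + (#s - #(s.filter (x · = b))) * g a := by
  have hcard : (#(s.filter (x · ≠ b)) : R) = #s - #(s.filter (x · = b)) := by
    rw [eq_sub_iff_add_eq', ← Nat.cast_add, card_filter_add_card_filter_not]
  rw [← sum_filter_add_sum_filter_not s (x · = b), ← hcard,
    sum_congr rfl fun j hj ↦ congrArg g (mem_filter.mp hj).2,
    sum_congr rfl fun j hj ↦ congrArg g ((hx j (mem_filter.mp hj).1).resolve_right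
      (mem_filter.mp hj).2)]
  simp only [sum_const, nsmul_eq_mul]

lemma le_two_point_sums_iff {p a b z k n : ℝ} (ha : a ≠ 0) (hb : 0 < b) (hn : 0 < n)
    (hk : k ∈ Icc 0 n) :
    z * n ^ (1 - 1 / p) * (k * b ^ p + (n - k) * |a| ^ p) ^ (1 / p) ≤ k * b + (n - k) * a ↔
      z ≤ crossFn p a b (k / n) := by
  have ht : k / n ∈ Icc (0 : ℝ) 1 := ⟨div_nonneg hk.1 hn.le, (div_le_one hn).mpr hk.2⟩
  set D := |a| ^ p + k / n * (b ^ p - |a| ^ p)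
  have hD : 0 < D := crossFn_denom_pos ha hb ht
  have hT : k * b ^ p + (n - k) * |a| ^ p = n * D := by
    simp only [D]; field_simp; ring
  have hS : k * b + (n - k) * a = n * (a + k / n * (b - a)) := by
    field_simp; ring
  have hlhs : z * n ^ (1 - 1 / p) * (n * D) ^ (1 / p) = n * (z * D ^ (1 / p)) := by
    have hn1 : n ^ (1 - 1 / p) * n ^ (1 / p) = n := by
      rw [← rpow_add hn, sub_add_cancel, rpow_one]
    rw [mul_rpow hn.le hD.le]
    linear_combination z * D ^ (1 / p) * hn1
  rw [hT, hS, hlhs, mul_le_mul_iff_right₀ hn, crossFn, le_div_iff₀ (rpow_pos_of_pos hD _)]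

theorem event_identity_two_point_a_neg_general
    {Ω : Type*}
    (X : ℕ → Ω → ℝ)
    (a b : ℝ) (ha : a < 0) (hb : 0 < b)
    (hval : ∀ j ω, X j ω = a ∨ X j ω = b)
    (p : ℝ) (hp : 1 < p)
    (z : ℝ) (hz2 : z < 1)
    (tz : ℝ) (htz : tz ∈ Set.Ioo (0 : ℝ) 1) (hftz : crossFn p a b tz = z)
    (huniq : ∀ t ∈ Set.Ioo (0 : ℝ) 1, crossFn p a b t = z → t = tz) :
    ∀ n : ℕ, 1 ≤ n →
      {ω | z * (n : ℝ) ^ (1 - 1 / p) * (∑ j ∈ Finset.range n, |X j ω| ^ p) ^ (1 / p)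
          ≤ ∑ j ∈ Finset.range n, X j ω}
        = {ω | tz * n ≤ (((Finset.range n).filter (fun j => X j ω = b)).card : ℝ)} := by
  intro n hn
  have hn0 : (0 : ℝ) < n := by exact_mod_cast hn
  ext ω
  have hk : (((Finset.range n).filter (fun j => X j ω = b)).card : ℝ) ∈ Icc 0 (n : ℝ) := by
    refine ⟨Nat.cast_nonneg _, ?_⟩
    exact_mod_cast (Finset.card_filter_le _ _).trans (Finset.card_range n).le
  have ht : ((Finset.range n).filter (fun j => X j ω = b)).card / (n : ℝ) ∈ Icc 0 1 :=
    ⟨div_nonneg hk.1 hn0.le, (div_le_one hn0).mpr hk.2⟩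
  have hS := sum_comp_eq_of_two_valued (Finset.range n) (X · ω) (fun y ↦ y) fun j _ ↦ hval j ω
  have hT := sum_comp_eq_of_two_valued (Finset.range n) (X · ω) (|·| ^ p) fun j _ ↦ hval j ω
  simp only [Finset.card_range, abs_of_pos hb] at hS hT
  rw [mem_ofPred_eq, mem_ofPred_eq, hS, hT, le_two_point_sums_iff ha.ne hb hn0 hk,
    le_crossFn_iff ha hb hp.le hz2 htz hftz huniq ht, le_div_iff₀ hn0]

/-- **Event identity, two-point case with `a < 0`.** Let `a < 0 < b`, `z ∈ (f(q), 1)` and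
let `t_z ∈ (0,1)` be the unique solution of `f(t) = z`. Then for every `n ≥ 1` the events
`Aₙ(z)` and `{Nₙ ≥ t_z·n}` coincide as subsets of the sample space. -/
theorem event_identity_two_point_a_neg
    {Ω : Type*} [MeasurableSpace Ω] (P : Measure Ω) [IsProbabilityMeasure P]
    (X : ℕ → Ω → ℝ) (hmeas : ∀ i, Measurable (X i))
    (hindep : iIndepFun X P)
    (a b q : ℝ) (ha : a < 0) (hb : 0 < b) (hq : q ∈ Set.Ioo (0 : ℝ) 1)
    (hval : ∀ j ω, X j ω = a ∨ X j ω = b)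
    (hdist : ∀ j, P {ω | X j ω = b} = ENNReal.ofReal q)
    (p : ℝ) (hp : 1 < p)
    (z : ℝ) (hz1 : crossFn p a b q < z) (hz2 : z < 1)
    (tz : ℝ) (htz : tz ∈ Set.Ioo (0 : ℝ) 1) (hftz : crossFn p a b tz = z)
    (huniq : ∀ t ∈ Set.Ioo (0 : ℝ) 1, crossFn p a b t = z → t = tz) :
    ∀ n : ℕ, 1 ≤ n →
      {ω | z * (n : ℝ) ^ (1 - 1 / p) * (∑ j ∈ Finset.range n, |X j ω| ^ p) ^ (1 / p)
          ≤ ∑ j ∈ Finset.range n, X j ω}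
        = {ω | tz * n ≤ (((Finset.range n).filter (fun j => X j ω = b)).card : ℝ)} :=
  event_identity_two_point_a_neg_general X a b ha hb hval p hp z hz2 tz htz hftz huniq
end

section
/- (Event identity, two-point case with a ≥ 0) Let 0 ≤ a < b with b > 0 and let z ∈ (f(q), 1). If a = 0, set t_+ := z^{p/(p−1)} ∈ (0,1); then for every n ≥ 1: A_n(z) = {N_n = 0} ∪ {N_n ≥ t_+·n}. If a > 0, let 0 < t_− < t_+ < 1 be the two solutions of f(t) = z; then for every n ≥ 1: A_n(z) = {N_n ≤ t_−·n} ∪ {N_n ≥ t_+·n}. -/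
open MeasureTheory ProbabilityTheory Real Set
open scoped ENNReal Classical

/-!
Every `X j` takes only the values `a` and `b`, so with `t = Nₙ / n` one has
`Sₙ = n · (a + t (b − a))` and `Tₙ = n · (|a|^p + t (b^p − |a|^p))`; by homogeneity `Aₙ(z)` is
the event `z · D(t)^{1/p} ≤ N(t)`, where `f = N / D^{1/p}` (`crossNum`, `crossDen`).
For `0 ≤ a < b` and `p > 1` the function `t ↦ z · D(t)^{1/p} − N(t)` is strictly concave on
`[0, ∞)`, hence nonpositive exactly off the open interval between two of its zeros: `t₋ < t₊`
when `a > 0`, and `0 < z^{p/(p−1)}` when `a = 0`.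
-/

noncomputable def crossNum (a b t : ℝ) : ℝ := a + t * (b - a)

noncomputable def crossDen (p a b t : ℝ) : ℝ := |a| ^ p + t * (b ^ p - |a| ^ p)

theorem crossFn_eq_div (p a b t : ℝ) :
    crossFn p a b t = crossNum a b t / crossDen p a b t ^ (1 / p) := rfl

theorem StrictConcaveOn.nonpos_iff_of_eq_zero {s : Set ℝ} {f : ℝ → ℝ}
    (hf : StrictConcaveOn ℝ s f) {x y t : ℝ} (hx : x ∈ s) (hy : y ∈ s) (hxy : x < y)
    (hfx : f x = 0) (hfy : f y = 0) (ht : t ∈ s) : f t ≤ 0 ↔ t ≤ x ∨ y ≤ t := by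
  have between {u v w : ℝ} (hu : u ∈ s) (hv : v ∈ s) (huw : u < w) (hwv : w < v) :
      min (f u) (f v) < f w :=
    hf.lt_on_openSegment hu hv (huw.trans hwv).ne
      (by rw [openSegment_eq_Ioo (huw.trans hwv)]; exact ⟨huw, hwv⟩)
  constructor
  · intro h
    by_contra! hxty
    have := between hx hy hxty.1 hxty.2
    rw [hfx, hfy, min_self] at this
    linarith
  · rintro (htx | hyt)
    · rcases htx.lt_or_eq with htx | rfl
      · have := between ht hy htx hxy
        rw [hfx, hfy, min_lt_iff] at this
        exact this.resolve_right (lt_irrefl 0) |>.le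
      · exact hfx.le
    · rcases hyt.lt_or_eq with hyt | rfl
      · have := between hx ht hxy hyt
        rw [hfx, hfy, min_lt_iff] at this
        exact this.resolve_left (lt_irrefl 0) |>.le
      · exact hfy.le

theorem StrictConcaveOn.const_mul_sub_affine {s : Set ℝ} {φ : ℝ → ℝ}
    (hφ : StrictConcaveOn ℝ s φ) {z : ℝ} (hz : 0 < z) (α β : ℝ) :
    StrictConcaveOn ℝ s (fun t => z * φ t - (α + t * β)) := by
  refine ⟨hφ.1, fun x hx y hy hxy a b ha hb hab => ?_⟩
  have hφxy := hφ.2 hx hy hxy ha hb hab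
  simp only [smul_eq_mul] at hφxy ⊢
  have haffine : a * (α + x * β) + b * (α + y * β) = α + (a * x + b * y) * β := by
    linear_combination α * hab
  nlinarith

theorem strictConcaveOn_rpow_affine {A D c : ℝ} (hA : 0 ≤ A) (hD : 0 < D) (hc₀ : 0 < c)
    (hc₁ : c < 1) : StrictConcaveOn ℝ (Ici 0) (fun t => (A + t * D) ^ c) := by
  refine ⟨convex_Ici 0, fun x hx y hy hxy a b ha hb hab => ?_⟩
  have hxD : 0 ≤ A + x * D := by have := mem_Ici.1 hx; positivity
  have hyD : 0 ≤ A + y * D := by have := mem_Ici.1 hy; positivity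
  have hne : A + x * D ≠ A + y * D := by
    intro h; exact hxy (mul_right_cancel₀ hD.ne' (add_left_cancel h))
  have := (Real.strictConcaveOn_rpow hc₀ hc₁).2 hxD hyD hne ha hb hab
  simp only [smul_eq_mul] at this ⊢
  convert this using 2
  linear_combination A * hab.symm

theorem Finset.sum_comp_of_two_valued {ι : Type*} (s : Finset ι) {x : ι → ℝ} {a b : ℝ}
    (hx : ∀ j ∈ s, x j = a ∨ x j = b) (g : ℝ → ℝ) :
    ∑ j ∈ s, g (x j) = s.card * g a + (s.filter (fun j => x j = b)).card * (g b - g a) := by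
  have hcard := s.card_filter_add_card_filter_not (fun j => x j = b)
  have hsum_b : ∑ j ∈ s.filter (fun j => x j = b), g (x j) =
      ∑ _ ∈ s.filter (fun j => x j = b), g b :=
    Finset.sum_congr rfl fun j hj => by rw [(Finset.mem_filter.1 hj).2]
  have hsum_a : ∑ j ∈ s.filter (fun j => ¬x j = b), g (x j) =
      ∑ _ ∈ s.filter (fun j => ¬x j = b), g a :=
    Finset.sum_congr rfl fun j hj => by
      obtain ⟨hjs, hjb⟩ := Finset.mem_filter.1 hj
      rw [(hx j hjs).resolve_right hjb]
  rw [← Finset.sum_filter_add_sum_filter_not s (fun j => x j = b), hsum_b, hsum_a,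
    Finset.sum_const, Finset.sum_const, nsmul_eq_mul, nsmul_eq_mul, ← hcard]
  push_cast
  ring

theorem rpow_one_sub_one_div_mul_rpow_mul {n D : ℝ} (hn : 0 < n) (hD : 0 ≤ D) (p : ℝ) :
    n ^ (1 - 1 / p) * (n * D) ^ (1 / p) = n * D ^ (1 / p) := by
  rw [Real.mul_rpow hn.le hD, ← mul_assoc, ← Real.rpow_add hn, sub_add_cancel, Real.rpow_one]

theorem scaled_le_sum_iff_of_two_valued {x : ℕ → ℝ} {a b : ℝ} (hb : 0 ≤ b)
    (hx : ∀ j, x j = a ∨ x j = b) (p z : ℝ) {n : ℕ} (hn : 0 < n) :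
    z * (n : ℝ) ^ (1 - 1 / p) * (∑ j ∈ Finset.range n, |x j| ^ p) ^ (1 / p)
        ≤ ∑ j ∈ Finset.range n, x j ↔
      z * crossDen p a b (((Finset.range n).filter (fun j => x j = b)).card / n) ^ (1 / p)
        ≤ crossNum a b (((Finset.range n).filter (fun j => x j = b)).card / n) := by
  set k := ((Finset.range n).filter (fun j => x j = b)).card
  have hn' : (0 : ℝ) < n := Nat.cast_pos.2 hn
  have hsum := Finset.sum_comp_of_two_valued (Finset.range n) (fun j _ => hx j)
  have hS : ∑ j ∈ Finset.range n, x j = n * crossNum a b (k / n) := by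
    have := hsum id
    simp only [id] at this
    rw [this, crossNum, Finset.card_range]
    field_simp
    ring
  have hT : ∑ j ∈ Finset.range n, |x j| ^ p = n * crossDen p a b (k / n) := by
    rw [hsum (fun y => |y| ^ p), crossDen, Finset.card_range, abs_of_nonneg hb]
    field_simp
    ring
  have hD : 0 ≤ crossDen p a b (k / n) :=
    (mul_nonneg_iff_of_pos_left hn').1
      (hT ▸ Finset.sum_nonneg fun j _ => Real.rpow_nonneg (abs_nonneg _) _)
  rw [hS, hT, mul_assoc, rpow_one_sub_one_div_mul_rpow_mul hn' hD, mul_left_comm,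
    mul_le_mul_iff_right₀ hn']

theorem crossNum_pos {a b t : ℝ} (ha : 0 ≤ a) (hab : a < b) (ht : 0 < t) :
    0 < crossNum a b t :=
  add_pos_of_nonneg_of_pos ha (mul_pos ht (sub_pos.2 hab))

theorem crossDen_sub_pos {p a b : ℝ} (hp : 0 < p) (ha : 0 ≤ a) (hab : a < b) :
    0 < b ^ p - |a| ^ p :=
  sub_pos.2 (Real.rpow_lt_rpow (abs_nonneg a) ((abs_of_nonneg ha).trans_lt hab) hp)

theorem crossDen_pos {p a b t : ℝ} (hp : 0 < p) (ha : 0 ≤ a) (hab : a < b) (ht : 0 < t) :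
    0 < crossDen p a b t :=
  add_pos_of_nonneg_of_pos (Real.rpow_nonneg (abs_nonneg a) p)
    (mul_pos ht (crossDen_sub_pos hp ha hab))

theorem crossFn_pos {p a b t : ℝ} (hp : 0 < p) (ha : 0 ≤ a) (hab : a < b) (ht : 0 < t) :
    0 < crossFn p a b t :=
  div_pos (crossNum_pos ha hab ht) (Real.rpow_pos_of_pos (crossDen_pos hp ha hab ht) _)

theorem mul_crossDen_rpow_eq_crossNum_of_crossFn_eq {p a b t z : ℝ}
    (hD : 0 < crossDen p a b t) (h : crossFn p a b t = z) :
    z * crossDen p a b t ^ (1 / p) = crossNum a b t := by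
  rw [crossFn_eq_div, div_eq_iff (Real.rpow_pos_of_pos hD _).ne'] at h
  exact h.symm

theorem mul_crossDen_rpow_zero_left {p b z : ℝ} (hp : 1 < p) (hb : 0 ≤ b) (hz : 0 < z) :
    z * crossDen p 0 b (z ^ (p / (p - 1))) ^ (1 / p) = crossNum 0 b (z ^ (p / (p - 1))) := by
  have hp₀ : p ≠ 0 := by positivity
  have hp₁ : p - 1 ≠ 0 := sub_ne_zero.2 hp.ne'
  have hroot : z * (z ^ (p / (p - 1))) ^ (1 / p) = z ^ (p / (p - 1)) := by
    rw [← Real.rpow_mul hz.le, ← Real.rpow_one_add' hz.le (by positivity)]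
    congr 1
    field_simp
    ring
  simp only [crossDen, crossNum, abs_zero, Real.zero_rpow hp₀, sub_zero, zero_add]
  rw [Real.mul_rpow (by positivity) (by positivity), ← Real.rpow_mul hb, mul_one_div_cancel hp₀,
    Real.rpow_one, ← mul_assoc, hroot]

theorem mul_crossDen_rpow_le_crossNum_iff {p a b z t₁ t₂ t : ℝ} (hp : 1 < p) (ha : 0 ≤ a)
    (hab : a < b) (hz : 0 < z) (ht₁ : 0 ≤ t₁) (h₁₂ : t₁ < t₂)
    (h₁ : z * crossDen p a b t₁ ^ (1 / p) = crossNum a b t₁)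
    (h₂ : z * crossDen p a b t₂ ^ (1 / p) = crossNum a b t₂) (ht : 0 ≤ t) :
    z * crossDen p a b t ^ (1 / p) ≤ crossNum a b t ↔ t ≤ t₁ ∨ t₂ ≤ t := by
  have hp₀ : 0 < p := by positivity
  have hψ : StrictConcaveOn ℝ (Ici 0) fun t => z * crossDen p a b t ^ (1 / p) - crossNum a b t :=
    (strictConcaveOn_rpow_affine (Real.rpow_nonneg (abs_nonneg a) p)
      (crossDen_sub_pos hp₀ ha hab) (by positivity)
      ((div_lt_one hp₀).2 hp)).const_mul_sub_affine hz a (b - a)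
  rw [← sub_nonpos]
  exact hψ.nonpos_iff_of_eq_zero ht₁ (ht₁.trans h₁₂.le) h₁₂ (sub_eq_zero.2 h₁)
    (sub_eq_zero.2 h₂) ht

theorem event_identity_two_point_a_nonneg_general
    {Ω : Type*} (X : ℕ → Ω → ℝ)
    (a b q : ℝ) (ha : 0 ≤ a) (hab : a < b) (hb : 0 < b) (hq : q ∈ Set.Ioo (0 : ℝ) 1)
    (hval : ∀ j ω, X j ω = a ∨ X j ω = b)
    (p : ℝ) (hp : 1 < p)
    (z : ℝ) (hz1 : crossFn p a b q < z) :
    (a = 0 → ∀ n : ℕ, 1 ≤ n →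
        {ω | z * (n : ℝ) ^ (1 - 1 / p) * (∑ j ∈ Finset.range n, |X j ω| ^ p) ^ (1 / p)
            ≤ ∑ j ∈ Finset.range n, X j ω}
          = {ω | ((Finset.range n).filter (fun j => X j ω = b)).card = 0}
            ∪ {ω | z ^ (p / (p - 1)) * n
                ≤ (((Finset.range n).filter (fun j => X j ω = b)).card : ℝ)})
      ∧ (0 < a → ∀ t₁ t₂ : ℝ, 0 < t₁ → t₁ < t₂ → t₂ < 1 →
          crossFn p a b t₁ = z → crossFn p a b t₂ = z →
          ∀ n : ℕ, 1 ≤ n →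
            {ω | z * (n : ℝ) ^ (1 - 1 / p) * (∑ j ∈ Finset.range n, |X j ω| ^ p) ^ (1 / p)
                ≤ ∑ j ∈ Finset.range n, X j ω}
              = {ω | (((Finset.range n).filter (fun j => X j ω = b)).card : ℝ) ≤ t₁ * n}
                ∪ {ω | t₂ * n
                    ≤ (((Finset.range n).filter (fun j => X j ω = b)).card : ℝ)}) := by
  have hp₀ : 0 < p := by positivity
  have hz : 0 < z := (crossFn_pos hp₀ ha hab hq.1).trans hz1
  have event_eq : ∀ t₁ t₂ : ℝ, 0 ≤ t₁ → t₁ < t₂ →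
      z * crossDen p a b t₁ ^ (1 / p) = crossNum a b t₁ →
      z * crossDen p a b t₂ ^ (1 / p) = crossNum a b t₂ → ∀ n : ℕ, 1 ≤ n →
      {ω | z * (n : ℝ) ^ (1 - 1 / p) * (∑ j ∈ Finset.range n, |X j ω| ^ p) ^ (1 / p)
          ≤ ∑ j ∈ Finset.range n, X j ω}
        = {ω | (((Finset.range n).filter (fun j => X j ω = b)).card : ℝ) ≤ t₁ * n}
          ∪ {ω | t₂ * n ≤ (((Finset.range n).filter (fun j => X j ω = b)).card : ℝ)} := by
    intro t₁ t₂ ht₁ h₁₂ h₁ h₂ n hn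
    have hn' : (0 : ℝ) < n := by exact_mod_cast hn
    ext ω
    rw [mem_ofPred_eq, scaled_le_sum_iff_of_two_valued hb.le (hval · ω) p z hn,
      mul_crossDen_rpow_le_crossNum_iff hp ha hab hz ht₁ h₁₂ h₁ h₂ (by positivity),
      div_le_iff₀ hn', le_div_iff₀ hn']
    rfl
  refine ⟨?_, fun _ t₁ t₂ ht₁ h₁₂ _ hf₁ hf₂ => event_eq t₁ t₂ ht₁.le h₁₂ ?_ ?_⟩
  · rintro rfl n hn
    have h₀ : z * crossDen p 0 b 0 ^ (1 / p) = crossNum 0 b 0 := by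
      simp [crossDen, crossNum, Real.zero_rpow, hp₀.ne']
    rw [event_eq 0 _ le_rfl (by positivity) h₀ (mul_crossDen_rpow_zero_left hp hb.le hz) n hn]
    simp only [zero_mul, Nat.cast_nonpos]
  · exact mul_crossDen_rpow_eq_crossNum_of_crossFn_eq (crossDen_pos hp₀ ha hab ht₁) hf₁
  · exact mul_crossDen_rpow_eq_crossNum_of_crossFn_eq
      (crossDen_pos hp₀ ha hab (ht₁.trans h₁₂)) hf₂

/-- **Event identity, two-point case with `a ≥ 0`.** Let `0 ≤ a < b`, `z ∈ (f(q), 1)`.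
If `a = 0`, then with `t₊ = z^{p/(p−1)}` one has `Aₙ(z) = {Nₙ = 0} ∪ {Nₙ ≥ t₊·n}` for all
`n ≥ 1`. If `a > 0` and `0 < t₋ < t₊ < 1` are the two solutions of `f(t) = z`, then
`Aₙ(z) = {Nₙ ≤ t₋·n} ∪ {Nₙ ≥ t₊·n}` for all `n ≥ 1`. -/
theorem event_identity_two_point_a_nonneg
    {Ω : Type*} [MeasurableSpace Ω] (P : Measure Ω) [IsProbabilityMeasure P]
    (X : ℕ → Ω → ℝ) (hmeas : ∀ i, Measurable (X i))
    (hindep : iIndepFun X P)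
    (a b q : ℝ) (ha : 0 ≤ a) (hab : a < b) (hb : 0 < b) (hq : q ∈ Set.Ioo (0 : ℝ) 1)
    (hval : ∀ j ω, X j ω = a ∨ X j ω = b)
    (hdist : ∀ j, P {ω | X j ω = b} = ENNReal.ofReal q)
    (p : ℝ) (hp : 1 < p)
    (z : ℝ) (hz1 : crossFn p a b q < z) (hz2 : z < 1) :
    (a = 0 → ∀ n : ℕ, 1 ≤ n →
        {ω | z * (n : ℝ) ^ (1 - 1 / p) * (∑ j ∈ Finset.range n, |X j ω| ^ p) ^ (1 / p)
            ≤ ∑ j ∈ Finset.range n, X j ω}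
          = {ω | ((Finset.range n).filter (fun j => X j ω = b)).card = 0}
            ∪ {ω | z ^ (p / (p - 1)) * n
                ≤ (((Finset.range n).filter (fun j => X j ω = b)).card : ℝ)})
      ∧ (0 < a → ∀ t₁ t₂ : ℝ, 0 < t₁ → t₁ < t₂ → t₂ < 1 →
          crossFn p a b t₁ = z → crossFn p a b t₂ = z →
          ∀ n : ℕ, 1 ≤ n →
            {ω | z * (n : ℝ) ^ (1 - 1 / p) * (∑ j ∈ Finset.range n, |X j ω| ^ p) ^ (1 / p)
                ≤ ∑ j ∈ Finset.range n, X j ω}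
              = {ω | (((Finset.range n).filter (fun j => X j ω = b)).card : ℝ) ≤ t₁ * n}
                ∪ {ω | t₂ * n
                    ≤ (((Finset.range n).filter (fun j => X j ω = b)).card : ℝ)}) :=
  event_identity_two_point_a_nonneg_general X a b q ha hab hb hq hval p hp z hz1
end

section
/- (Theorem 3(ii): exact asymptotics, two-point case with a = 0) Let a = 0 < b, z ∈ (f(q), 1), and t_+ := z^{p/(p−1)} ∈ (0,1) (then t_+ > q). With α_n := ⌈n·t_+⌉/n one has, as n → ∞: P(A_n(z)) = (1−q)^n + (1 + o(1)) · Q_n(α_n). -/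
open MeasureTheory ProbabilityTheory Real Set Filter
open scoped ENNReal Classical

/-- The upper-tail exact binomial large-deviation asymptotics factor
`Q_n(α) = √(α/(2πn(1−α))) · ((1−q)/(α−q)) · (q/α)^{nα} · ((1−q)/(1−α))^{n(1−α)}`. -/
noncomputable def binomQ (q : ℝ) (n : ℕ) (α : ℝ) : ℝ :=
  Real.sqrt (α / (2 * Real.pi * n * (1 - α))) * ((1 - q) / (α - q)) *
    (q / α) ^ ((n : ℝ) * α) * ((1 - q) / (1 - α)) ^ ((n : ℝ) * (1 - α))

/-!
On the almost sure event that every `X j ∈ {0, b}`, both sums are multiples of the number `N` of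
indices `j < n` with `X j = b`: `Sₙ = N b` and `Tₙ = N bᵖ`. Hence `Aₙ(z)` is, up to a null set,
`{N = 0} ∪ {N ≥ n t₊}`, and `N` is binomial, so `P(Aₙ(z)) = (1 - q)ⁿ + P(N ≥ k)` with
`k = ⌈n t₊⌉`. The upper tail is its first term `b(n, k)` times `∑ᵢ ∏_{j<i} r(k + j)`, where the
ratios `r` of consecutive binomial weights tend to `ρ = q(1 - t₊)/((1 - q)t₊) < 1`; by dominated
convergence that sum tends to `1/(1 - ρ)`. Stirling's formula for `b(n, k)` turns
`b(n, k)/(1 - ρ)` into `(1 + o(1)) Qₙ(k/n)`.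
-/

open scoped Topology

noncomputable def binomWeight (q : ℝ) (n j : ℕ) : ℝ := n.choose j * q ^ j * (1 - q) ^ (n - j)

-- Real subtraction makes `binomRatio q n n = 0`, so products of ratios running past `n` vanish.
noncomputable def binomRatio (q : ℝ) (n j : ℕ) : ℝ := q * (n - j) / ((1 - q) * (j + 1))

lemma binomWeight_succ {q : ℝ} (hq : q ≠ 1) (n j : ℕ) :
    binomWeight q n (j + 1) = binomWeight q n j * binomRatio q n j := by
  have h1q : 1 - q ≠ 0 := sub_ne_zero.2 hq.symm
  rcases lt_trichotomy j n with hj | rfl | hj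
  · obtain ⟨m, rfl⟩ : ∃ m, n = j + 1 + m := ⟨n - (j + 1), by omega⟩
    have hchoose : ((j + 1 + m).choose (j + 1) : ℝ) * (j + 1) = (j + 1 + m).choose j * (m + 1) := by
      have := Nat.choose_succ_right_eq (j + 1 + m) j
      rw [show j + 1 + m - j = m + 1 by omega] at this
      exact_mod_cast this
    rw [binomWeight, binomWeight, binomRatio, show j + 1 + m - j = m + 1 by omega,
      show j + 1 + m - (j + 1) = m by omega]
    field_simp
    push_cast
    linear_combination q ^ (j + 1) * (1 - q) ^ (m + 1) * hchoose
  · simp [binomWeight, binomRatio]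
  · simp [binomWeight, Nat.choose_eq_zero_of_lt hj,
      Nat.choose_eq_zero_of_lt (hj.trans j.lt_succ_self)]

lemma binomWeight_add {q : ℝ} (hq : q ≠ 1) (n k i : ℕ) :
    binomWeight q n (k + i) = binomWeight q n k * ∏ j ∈ Finset.range i, binomRatio q n (k + j) := by
  induction i with
  | zero => simp
  | succ i ih => rw [← add_assoc, binomWeight_succ hq, ih, Finset.prod_range_succ, mul_assoc]

lemma binomRatio_self (q : ℝ) (n : ℕ) : binomRatio q n n = 0 := by simp [binomRatio]

lemma sum_Icc_binomWeight_eq_mul_tsum {q : ℝ} (hq : q ≠ 1) {k n : ℕ} (hk : k ≤ n) :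
    ∑ j ∈ Finset.Icc k n, binomWeight q n j
      = binomWeight q n k * ∑' i, ∏ j ∈ Finset.range i, binomRatio q n (k + j) := by
  have hvanish : ∀ i ∉ Finset.range (n + 1 - k),
      ∏ j ∈ Finset.range i, binomRatio q n (k + j) = 0 := by
    intro i hi
    refine Finset.prod_eq_zero (i := n - k) (by simp at hi ⊢; omega) ?_
    rw [Nat.add_sub_cancel' hk, binomRatio_self]
  rw [tsum_eq_sum hvanish, Finset.mul_sum, ← Finset.Ico_add_one_right_eq_Icc,
    Finset.sum_Ico_eq_sum_range]
  exact Finset.sum_congr rfl fun i _ => binomWeight_add hq n k i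

lemma binomRatio_nonneg {q : ℝ} (hq0 : 0 ≤ q) (hq1 : q ≤ 1) {n j : ℕ} (hj : j ≤ n) :
    0 ≤ binomRatio q n j := by
  have : (j : ℝ) ≤ n := by exact_mod_cast hj
  unfold binomRatio
  apply div_nonneg <;> nlinarith

lemma antitone_binomRatio {q : ℝ} (hq0 : 0 ≤ q) (hq1 : q < 1) (n : ℕ) :
    Antitone (binomRatio q n) := by
  intro j j' hj
  have hjj : (0 : ℝ) ≤ j' - j := by
    have : (j : ℝ) ≤ j' := by exact_mod_cast hj
    linarith
  unfold binomRatio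
  rw [div_le_div_iff₀ (by positivity) (by positivity)]
  have : 0 ≤ q * (1 - q) * ((n + 1) * (j' - j)) := by
    apply mul_nonneg (by nlinarith) (mul_nonneg (by positivity) hjj)
  nlinarith

lemma norm_prod_binomRatio_le {q r : ℝ} (hq0 : 0 ≤ q) (hq1 : q < 1) {n k : ℕ} (hk : k ≤ n)
    (hr : binomRatio q n k ≤ r) (i : ℕ) :
    ‖∏ j ∈ Finset.range i, binomRatio q n (k + j)‖ ≤ r ^ i := by
  by_cases hi : i ≤ n - k
  · have hfac : ∀ j ∈ Finset.range i, 0 ≤ binomRatio q n (k + j) :=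
      fun j hj => binomRatio_nonneg hq0 hq1.le (by simp at hj; omega)
    rw [Real.norm_of_nonneg (Finset.prod_nonneg hfac)]
    refine (Finset.prod_le_prod hfac fun j _ => ?_).trans_eq
      (by rw [Finset.prod_const, Finset.card_range])
    exact (antitone_binomRatio hq0 hq1 n (Nat.le_add_right k j)).trans hr
  · rw [Finset.prod_eq_zero (i := n - k) (by simp; omega)
      (by rw [Nat.add_sub_cancel' hk, binomRatio_self]), norm_zero]
    exact pow_nonneg ((binomRatio_nonneg hq0 hq1.le hk).trans hr) i

lemma tendsto_atTop_of_tendsto_div_natCast {K : ℕ → ℕ} {t : ℝ} (ht : 0 < t)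
    (hK : Tendsto (fun n => (K n : ℝ) / n) atTop (𝓝 t)) : Tendsto K atTop atTop := by
  have h : Tendsto (fun n : ℕ => (n : ℝ) * ((K n : ℝ) / n)) atTop atTop :=
    tendsto_natCast_atTop_atTop.atTop_mul_pos ht hK
  refine tendsto_natCast_atTop_iff.1 (h.congr' ?_)
  filter_upwards [eventually_ne_atTop 0] with n hn
  field_simp

lemma eventually_lt_of_tendsto_div_natCast {K : ℕ → ℕ} {t : ℝ} (ht : t < 1)
    (hK : Tendsto (fun n => (K n : ℝ) / n) atTop (𝓝 t)) : ∀ᶠ n in atTop, K n < n := by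
  filter_upwards [hK.eventually_lt_const ht, eventually_ne_atTop 0] with n hKn hn
  exact_mod_cast (div_lt_one (by positivity)).1 hKn

lemma tendsto_sub_div_natCast {K : ℕ → ℕ} {t : ℝ} (ht : t < 1)
    (hK : Tendsto (fun n => (K n : ℝ) / n) atTop (𝓝 t)) :
    Tendsto (fun n => ((n - K n : ℕ) : ℝ) / n) atTop (𝓝 (1 - t)) := by
  refine (tendsto_const_nhds.sub hK).congr' ?_
  filter_upwards [eventually_lt_of_tendsto_div_natCast ht hK, eventually_ne_atTop 0] with n hKn hn
  rw [Nat.cast_sub hKn.le]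
  field_simp

lemma tendsto_binomRatio {q t : ℝ} (hq : q ≠ 1) (ht : t ≠ 0) {K : ℕ → ℕ}
    (hK : Tendsto (fun n => (K n : ℝ) / n) atTop (𝓝 t)) (j : ℕ) :
    Tendsto (fun n => binomRatio q n (K n + j)) atTop (𝓝 (q * (1 - t) / ((1 - q) * t))) := by
  have h0 : Tendsto (fun n : ℕ => (1 : ℝ) / n) atTop (𝓝 0) := tendsto_one_div_atTop_nhds_zero_nat
  have hlim : Tendsto (fun n : ℕ => q * (1 - (K n : ℝ) / n - j * (1 / n)) /
      ((1 - q) * ((K n : ℝ) / n + (j + 1) * (1 / n)))) atTop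
      (𝓝 (q * (1 - t - j * 0) / ((1 - q) * (t + (j + 1) * 0)))) :=
    (tendsto_const_nhds.mul ((tendsto_const_nhds.sub hK).sub (tendsto_const_nhds.mul h0))).div
      (tendsto_const_nhds.mul (hK.add (tendsto_const_nhds.mul h0)))
      (by simpa using And.intro (sub_ne_zero.2 hq.symm) ht)
  simp only [mul_zero, sub_zero, add_zero] at hlim
  refine hlim.congr' ?_
  filter_upwards [eventually_ne_atTop 0] with n hn
  unfold binomRatio
  push_cast
  have h1q : 1 - q ≠ 0 := sub_ne_zero.2 hq.symm
  field_simp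
  ring

lemma tendsto_tsum_prod_binomRatio {q t : ℝ} (hq0 : 0 ≤ q) (hqt : q < t) (ht1 : t < 1)
    {K : ℕ → ℕ} (hK : Tendsto (fun n => (K n : ℝ) / n) atTop (𝓝 t)) :
    Tendsto (fun n => ∑' i, ∏ j ∈ Finset.range i, binomRatio q n (K n + j)) atTop
      (𝓝 ((1 - q) * t / (t - q))) := by
  have ht0 : 0 < t := hq0.trans_lt hqt
  have hq1 : q < 1 := hqt.trans ht1
  set ρ := q * (1 - t) / ((1 - q) * t) with hρ
  have hden : (1 - q) * t ≠ 0 := mul_ne_zero (by linarith) ht0.ne'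
  have hρ0 : 0 ≤ ρ := div_nonneg (mul_nonneg hq0 (by linarith)) (by nlinarith)
  have hρ1 : ρ < 1 := (div_lt_one (by nlinarith)).2 (by nlinarith)
  obtain ⟨ρ', hρρ', hρ'1⟩ := exists_between hρ1
  have hbound : ∀ᶠ n in atTop, ∀ i, ‖∏ j ∈ Finset.range i, binomRatio q n (K n + j)‖ ≤ ρ' ^ i := by
    filter_upwards [(tendsto_binomRatio hq1.ne ht0.ne' hK 0).eventually_lt_const hρρ',
      eventually_lt_of_tendsto_div_natCast ht1 hK] with n hn hKn
    exact norm_prod_binomRatio_le hq0 hq1 hKn.le hn.le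
  have hlim := tendsto_tsum_of_dominated_convergence
    (summable_geometric_of_lt_one (hρ0.trans hρρ'.le) hρ'1)
    (fun i => by
      simpa only [Finset.prod_const, Finset.card_range] using
        tendsto_finsetProd (Finset.range i) fun j _ => tendsto_binomRatio hq1.ne ht0.ne' hK j)
    hbound
  rw [tsum_geometric_of_lt_one hρ0 hρ1] at hlim
  have h1ρ : 1 - ρ = (t - q) / ((1 - q) * t) := by
    rw [hρ, one_sub_div hden]
    ring
  rwa [h1ρ, inv_div] at hlim

lemma binomWeight_mul_sqrt_eq_stirlingSeq {k m : ℕ} (hk : k ≠ 0) (hm : m ≠ 0) :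
    binomWeight (k / (k + m)) (k + m) k * √(2 * π * k * m / (k + m))
      = √π * Stirling.stirlingSeq (k + m) / (Stirling.stirlingSeq k * Stirling.stirlingSeq m) := by
  have hk0 : (0 : ℝ) < k := by positivity
  have hm0 : (0 : ℝ) < m := by positivity
  have hkm : (k : ℝ) + m ≠ 0 := by positivity
  have hsqrt2 : ∀ x : ℝ, 0 ≤ x → √(2 * x) = √2 * √x := fun x _ => Real.sqrt_mul (by norm_num) x
  have hsqrt : √(2 * π * k * m / (k + m)) = √2 * √π * √k * √m / √(k + m) := by
    rw [Real.sqrt_div (by positivity), Real.sqrt_mul (by positivity), Real.sqrt_mul (by positivity),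
      Real.sqrt_mul (by positivity)]
  have h1k : 1 - (k : ℝ) / (k + m) = m / (k + m) := by field_simp; ring
  rw [binomWeight, h1k, Nat.add_sub_cancel_left, Nat.cast_choose ℝ (Nat.le_add_right k m),
    Nat.add_sub_cancel_left, hsqrt]
  simp only [Stirling.stirlingSeq, Nat.cast_add]
  rw [hsqrt2 _ (by positivity), hsqrt2 _ hk0.le, hsqrt2 _ hm0.le, div_pow, div_pow, div_pow,
    div_pow, div_pow, pow_add, pow_add]
  have : √(k : ℝ) ≠ 0 := by positivity
  have : √(m : ℝ) ≠ 0 := by positivity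
  have : √((k : ℝ) + m) ≠ 0 := by positivity
  have : √π ≠ 0 := by positivity
  field_simp

lemma tendsto_binomWeight_mul_sqrt {ι : Type*} {l : Filter ι} {k m : ι → ℕ}
    (hk : Tendsto k l atTop) (hm : Tendsto m l atTop) :
    Tendsto (fun x => binomWeight (k x / (k x + m x)) (k x + m x) (k x)
      * √(2 * π * k x * m x / (k x + m x))) l (𝓝 1) := by
  have hs := Stirling.tendsto_stirlingSeq_sqrt_pi
  have hπ : √π ≠ 0 := by positivity
  have hlim := (tendsto_const_nhds (x := √π)).mul (hs.comp (hk.atTop_add_atTop hm)) |>.div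
    ((hs.comp hk).mul (hs.comp hm)) (mul_ne_zero hπ hπ)
  rw [div_self (mul_ne_zero hπ hπ)] at hlim
  refine hlim.congr' ?_
  filter_upwards [hk.eventually_ne_atTop 0, hm.eventually_ne_atTop 0] with x hkx hmx
  exact (binomWeight_mul_sqrt_eq_stirlingSeq hkx hmx).symm

lemma binomWeight_eq_binomQ_mul {q : ℝ} (hq : q ≠ 1) {n k : ℕ} (hk : k ≠ 0) (hkn : k < n)
    (hqk : (k : ℝ) / n ≠ q) :
    binomWeight q n k = binomQ q n (k / n)
      * (binomWeight (k / n) n k * √(2 * π * k * (n - k : ℕ) / n))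
      * ((k / n - q) / (k / n * (1 - q))) := by
  set α : ℝ := k / n with hα
  have hn : (0 : ℝ) < n := by exact_mod_cast (Nat.zero_le k).trans_lt hkn
  have hα0 : 0 < α := by positivity
  have hnk : (0 : ℝ) < (n - k : ℕ) := by exact_mod_cast Nat.sub_pos_of_lt hkn
  have h1α : 1 - α = (n - k : ℕ) / n := by rw [hα, Nat.cast_sub hkn.le]; field_simp
  have hnα : (n : ℝ) * α = k := by rw [hα]; field_simp
  have hn1α : (n : ℝ) * (1 - α) = (n - k : ℕ) := by rw [h1α]; field_simp
  have hsqrt : √(α / (2 * π * n * (1 - α))) * √(2 * π * k * (n - k : ℕ) / n) = α := by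
    rw [← Real.sqrt_mul (by rw [h1α]; positivity), h1α, hα]
    rw [show (k : ℝ) / n / (2 * π * n * ((n - k : ℕ) / n)) * (2 * π * k * (n - k : ℕ) / n)
      = (k / n) ^ 2 by field_simp]
    exact Real.sqrt_sq (by positivity)
  have h1α0 : 1 - α ≠ 0 := by rw [h1α]; positivity
  have h1q : 1 - q ≠ 0 := sub_ne_zero.2 hq.symm
  have hαq : α - q ≠ 0 := sub_ne_zero.2 hqk
  rw [binomQ, hnα, hn1α, Real.rpow_natCast, Real.rpow_natCast, binomWeight, binomWeight]
  calc _ = (√(α / (2 * π * n * (1 - α))) * √(2 * π * k * (n - k : ℕ) / n)) * n.choose k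
        * ((q / α) ^ k * α ^ k) * (((1 - q) / (1 - α)) ^ (n - k) * (1 - α) ^ (n - k))
        * ((1 - q) / (α - q) * ((α - q) / (α * (1 - q)))) := by
        rw [hsqrt, ← mul_pow, ← mul_pow, div_mul_cancel₀ _ hα0.ne', div_mul_cancel₀ _ h1α0]
        field_simp
    _ = _ := by ring

lemma binomWeight_pos {q : ℝ} (hq0 : 0 < q) (hq1 : q < 1) {n k : ℕ} (hk : k ≤ n) :
    0 < binomWeight q n k := by
  have := Nat.choose_pos hk
  unfold binomWeight
  have : 0 < 1 - q := by linarith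
  positivity

theorem tendsto_sum_Icc_binomWeight_div_binomQ {q t : ℝ} (hq0 : 0 < q) (hqt : q < t) (ht1 : t < 1)
    {K : ℕ → ℕ} (hK : Tendsto (fun n => (K n : ℝ) / n) atTop (𝓝 t)) :
    Tendsto (fun n => (∑ j ∈ Finset.Icc (K n) n, binomWeight q n j) / binomQ q n (K n / n))
      atTop (𝓝 1) := by
  have ht0 : 0 < t := hq0.trans hqt
  have hq1 : q < 1 := hqt.trans ht1
  have hKtop := tendsto_atTop_of_tendsto_div_natCast ht0 hK
  have hKlt := eventually_lt_of_tendsto_div_natCast ht1 hK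
  have hstirling : Tendsto (fun n => binomWeight (K n / n) n (K n)
      * √(2 * π * K n * (n - K n : ℕ) / n)) atTop (𝓝 1) := by
    refine (tendsto_binomWeight_mul_sqrt hKtop (tendsto_atTop_of_tendsto_div_natCast
      (sub_pos.2 ht1) (tendsto_sub_div_natCast ht1 hK))).congr' ?_
    filter_upwards [hKlt] with n hn
    rw [← Nat.cast_add, Nat.add_sub_cancel' hn.le]
  have hfactor : Tendsto (fun n => ((K n : ℝ) / n - q) / ((K n : ℝ) / n * (1 - q))) atTop
      (𝓝 ((t - q) / (t * (1 - q)))) :=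
    (hK.sub_const q).div (hK.mul_const _) (mul_ne_zero ht0.ne' (sub_ne_zero.2 hq1.ne'))
  have hlim := (tendsto_tsum_prod_binomRatio hq0.le hqt ht1 hK).mul (hstirling.mul hfactor)
  rw [show (1 - q) * t / (t - q) * (1 * ((t - q) / (t * (1 - q)))) = 1 by
    field_simp [sub_ne_zero.2 hq1.ne', sub_ne_zero.2 hqt.ne']] at hlim
  refine hlim.congr' ?_
  filter_upwards [hKlt, hKtop.eventually_ne_atTop 0, hK.eventually_const_lt hqt] with n hKn hK0 hqK
  have hw := binomWeight_eq_binomQ_mul hq1.ne hK0 hKn hqK.ne'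
  have hQ : binomQ q n (K n / n) ≠ 0 := by
    intro hQ
    rw [hQ, zero_mul, zero_mul] at hw
    exact (binomWeight_pos hq0 hq1 hKn.le).ne' hw
  rw [sum_Icc_binomWeight_eq_mul_tsum hq1.ne hKn.le, hw]
  field_simp

lemma crossFn_zero_left {p b q : ℝ} (hp : p ≠ 0) (hb : 0 < b) (hq : 0 < q) :
    crossFn p 0 b q = q ^ (1 - 1 / p) := by
  rw [crossFn, abs_zero, Real.zero_rpow hp, zero_add, sub_zero, zero_add, sub_zero,
    Real.mul_rpow hq.le (by positivity), ← Real.rpow_mul hb.le, mul_one_div_cancel hp,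
    Real.rpow_one, mul_div_mul_right _ _ hb.ne', Real.rpow_sub hq, Real.rpow_one]

lemma selfNormalized_le_iff {b z p : ℝ} (hb : 0 < b) (hz : 0 < z) (hp : 1 < p) (n K : ℕ) :
    z * (n : ℝ) ^ (1 - 1 / p) * ((K : ℝ) * b ^ p) ^ (1 / p) ≤ K * b
      ↔ K = 0 ∨ (n : ℝ) * z ^ (p / (p - 1)) ≤ K := by
  have hp0 : 0 < p := one_pos.trans hp
  rcases Nat.eq_zero_or_pos K with rfl | hK
  · simp [Real.zero_rpow (inv_ne_zero hp0.ne')]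
  have hK0 : (0 : ℝ) < K := by exact_mod_cast hK
  set c := 1 - 1 / p with hc_def
  have hc : 0 < c := by rw [hc_def, sub_pos, div_lt_one hp0]; exact hp
  have hpc : p / (p - 1) = c⁻¹ := by rw [hc_def]; field_simp
  have hKb : ((K : ℝ) * b ^ p) ^ (1 / p) = K ^ (1 / p) * b := by
    rw [Real.mul_rpow hK0.le (by positivity), ← Real.rpow_mul hb.le, mul_one_div_cancel hp0.ne',
      Real.rpow_one]
  have hK' : (K : ℝ) * b = K ^ c * (K ^ (1 / p) * b) := by
    rw [← mul_assoc, ← Real.rpow_add hK0, hc_def, sub_add_cancel, Real.rpow_one]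
  have hzn : z * (n : ℝ) ^ c = ((n : ℝ) * z ^ c⁻¹) ^ c := by
    rw [Real.mul_rpow (by positivity) (by positivity), Real.rpow_inv_rpow hz.le hc.ne', mul_comm]
  rw [hKb, hK', mul_le_mul_iff_of_pos_right (by positivity), hzn,
    Real.rpow_le_rpow_iff (by positivity) hK0.le hc, hpc]
  simp [hK.ne']

noncomputable def twoPointLaw (a b q : ℝ) : Measure ℝ :=
  ENNReal.ofReal q • Measure.dirac b + ENNReal.ofReal (1 - q) • Measure.dirac a

section TwoPoint

variable {Ω : Type*}

noncomputable def patternEvent (X : ℕ → Ω → ℝ) (a b : ℝ) (n : ℕ) (s : Finset ℕ) : Set Ω :=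
  ⋂ i ∈ Finset.range n, X i ⁻¹' (if i ∈ s then {b} else {a})

noncomputable def countValue (X : ℕ → Ω → ℝ) (b : ℝ) (n : ℕ) (ω : Ω) : ℕ :=
  ((Finset.range n).filter fun i => X i ω = b).card

variable {X : ℕ → Ω → ℝ} {a b q : ℝ}

lemma mem_patternEvent_iff (hab : a ≠ b) {n : ℕ} {s : Finset ℕ} (hs : s ⊆ Finset.range n)
    {ω : Ω} : ω ∈ patternEvent X a b n s ↔
      (∀ i ∈ Finset.range n, X i ω = a ∨ X i ω = b)
        ∧ (Finset.range n).filter (fun i => X i ω = b) = s := by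
  simp only [patternEvent, Set.mem_iInter, Set.mem_preimage]
  constructor
  · intro h
    refine ⟨fun i hi => ?_, ?_⟩
    · have := h i hi
      split_ifs at this <;> simp_all
    · ext i
      simp only [Finset.mem_filter]
      constructor
      · rintro ⟨hi, hb⟩
        by_contra his
        have := h i hi
        simp_all
      · intro his
        have hi := hs his
        have := h i hi
        simp_all
  · rintro ⟨hgood, rfl⟩ i hi
    rcases hgood i hi with h | h <;> simp_all

lemma sum_eq_countValue_mul {n : ℕ} {ω : Ω}
    (hω : ∀ i ∈ Finset.range n, X i ω = 0 ∨ X i ω = b) {f : ℝ → ℝ} (hf : f 0 = 0) :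
    ∑ i ∈ Finset.range n, f (X i ω) = countValue X b n ω * f b := by
  rw [countValue, ← nsmul_eq_mul, ← Finset.sum_const, Finset.sum_filter]
  refine Finset.sum_congr rfl fun i hi => ?_
  rcases hω i hi with h | h <;> by_cases hb : X i ω = b <;> simp_all

variable [MeasurableSpace Ω] {P : Measure Ω}

lemma ae_eq_or_eq_of_map_eq_twoPointLaw {Y : Ω → ℝ} (hY : Measurable Y)
    (hlaw : P.map Y = twoPointLaw a b q) :
    ∀ᵐ ω ∂P, Y ω = a ∨ Y ω = b := by
  have : P (Y ⁻¹' ({a, b} : Set ℝ)ᶜ) = 0 := by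
    rw [← Measure.map_apply hY (by measurability), hlaw]
    simp [twoPointLaw]
  filter_upwards [measure_eq_zero_iff_ae_notMem.1 this] with ω hω
  simpa [or_iff_not_imp_left] using hω

lemma ae_forall_eq_or_eq (hmeas : ∀ i, Measurable (X i))
    (hlaw : ∀ i, P.map (X i) = twoPointLaw a b q) : ∀ᵐ ω ∂P, ∀ i, X i ω = a ∨ X i ω = b :=
  ae_all_iff.2 fun i => ae_eq_or_eq_of_map_eq_twoPointLaw (hmeas i) (hlaw i)

lemma measure_preimage_of_map_eq_twoPointLaw {Y : Ω → ℝ} (hY : Measurable Y) (hab : a ≠ b)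
    (hlaw : P.map Y = twoPointLaw a b q) :
    P (Y ⁻¹' {b}) = ENNReal.ofReal q ∧ P (Y ⁻¹' {a}) = ENNReal.ofReal (1 - q) := by
  rw [← Measure.map_apply hY (measurableSet_singleton b),
    ← Measure.map_apply hY (measurableSet_singleton a), hlaw]
  simp [twoPointLaw, hab]

lemma measurableSet_patternEvent (hmeas : ∀ i, Measurable (X i)) (n : ℕ) (s : Finset ℕ) :
    MeasurableSet (patternEvent X a b n s) :=
  .biInter (Finset.range n).countable_toSet fun i _ =>
    hmeas i (by split_ifs <;> exact measurableSet_singleton _)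

lemma measure_patternEvent (hmeas : ∀ i, Measurable (X i)) (hindep : iIndepFun X P)
    (hab : a ≠ b)
    (hlaw : ∀ i, P.map (X i) = twoPointLaw a b q)
    {n : ℕ} {s : Finset ℕ} (hs : s ⊆ Finset.range n) :
    P (patternEvent X a b n s)
      = ENNReal.ofReal q ^ s.card * ENNReal.ofReal (1 - q) ^ (n - s.card) := by
  rw [patternEvent, hindep.measure_inter_preimage_eq_mul _ fun i _ => by
    split_ifs <;> exact measurableSet_singleton _]
  have hfactor : ∀ i, P (X i ⁻¹' (if i ∈ s then {b} else {a}))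
      = if i ∈ s then ENNReal.ofReal q else ENNReal.ofReal (1 - q) := fun i => by
    split_ifs
    exacts [(measure_preimage_of_map_eq_twoPointLaw (hmeas i) hab (hlaw i)).1,
      (measure_preimage_of_map_eq_twoPointLaw (hmeas i) hab (hlaw i)).2]
  simp only [hfactor]
  rw [Finset.prod_ite, Finset.prod_const, Finset.prod_const, Finset.filter_mem_eq_inter,
    Finset.inter_eq_right.2 hs, Finset.filter_not, Finset.filter_mem_eq_inter,
    Finset.inter_eq_right.2 hs, Finset.card_sdiff_of_subset hs, Finset.card_range]

lemma measurable_countValue (hmeas : ∀ i, Measurable (X i)) (b : ℝ) (n : ℕ) :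
    Measurable (countValue X b n) := by
  have : countValue X b n = fun ω => ∑ i ∈ Finset.range n, if X i ω = b then 1 else 0 :=
    funext fun ω => Finset.card_filter _ _
  rw [this]
  exact Finset.measurable_sum _ fun i _ =>
    Measurable.ite (measurableSet_eq_fun (hmeas i) measurable_const) measurable_const
      measurable_const

lemma measure_countValue_eq (hmeas : ∀ i, Measurable (X i)) (hindep : iIndepFun X P)
    (hab : a ≠ b)
    (hlaw : ∀ i, P.map (X i) = twoPointLaw a b q)
    (n k : ℕ) :
    P (countValue X b n ⁻¹' {k})
      = n.choose k * ENNReal.ofReal q ^ k * ENNReal.ofReal (1 - q) ^ (n - k) := by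
  have hae : countValue X b n ⁻¹' {k}
      =ᵐ[P] ⋃ s ∈ Finset.powersetCard k (Finset.range n), patternEvent X a b n s := by
    refine Filter.eventuallyEq_set.2 ?_
    filter_upwards [ae_forall_eq_or_eq hmeas hlaw] with ω hω
    simp only [Set.mem_preimage, Set.mem_singleton_iff, Set.mem_iUnion, Finset.mem_powersetCard,
      exists_prop]
    constructor
    · rintro rfl
      exact ⟨_, ⟨Finset.filter_subset _ _, rfl⟩,
        (mem_patternEvent_iff hab (Finset.filter_subset _ _)).2 ⟨fun i _ => hω i, rfl⟩⟩
    · rintro ⟨s, ⟨hs, rfl⟩, hωs⟩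
      rw [countValue, ((mem_patternEvent_iff hab hs).1 hωs).2]
  have hdisj : Set.PairwiseDisjoint ↑(Finset.powersetCard k (Finset.range n))
      (patternEvent X a b n) := by
    intro s hs s' hs' hne
    simp only [Finset.mem_coe, Finset.mem_powersetCard] at hs hs'
    refine Set.disjoint_left.2 fun ω hω hω' => hne ?_
    rw [← ((mem_patternEvent_iff hab hs.1).1 hω).2, ((mem_patternEvent_iff hab hs'.1).1 hω').2]
  rw [measure_congr hae,
    measure_biUnion_finset hdisj fun s _ => measurableSet_patternEvent hmeas n s]
  calc ∑ s ∈ Finset.powersetCard k (Finset.range n), P (patternEvent X a b n s)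
      = ∑ s ∈ Finset.powersetCard k (Finset.range n),
          ENNReal.ofReal q ^ k * ENNReal.ofReal (1 - q) ^ (n - k) :=
        Finset.sum_congr rfl fun s hs => by
          rw [Finset.mem_powersetCard] at hs
          rw [measure_patternEvent hmeas hindep hab hlaw hs.1, hs.2]
    _ = _ := by
      rw [Finset.sum_const, Finset.card_powersetCard, Finset.card_range, nsmul_eq_mul, mul_assoc]

theorem hasLaw_countValue_binomial (hmeas : ∀ i, Measurable (X i)) (hindep : iIndepFun X P)
    (hab : a ≠ b) (hq : q ∈ Set.Icc 0 1)
    (hlaw : ∀ i, P.map (X i) = twoPointLaw a b q)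
    (n : ℕ) : HasLaw (countValue X b n) (binomial n ⟨q, hq⟩) P where
  aemeasurable := (measurable_countValue hmeas b n).aemeasurable
  map_eq := Measure.ext_of_singleton fun k => by
    rw [Measure.map_apply (measurable_countValue hmeas b n) (measurableSet_singleton k),
      measure_countValue_eq hmeas hindep hab hlaw, binomial_singleton, ENNReal.ofReal_mul
      (by have := hq.1; positivity), ENNReal.ofReal_mul (by positivity), ENNReal.ofReal_pow hq.1,
      ENNReal.ofReal_pow (sub_nonneg.2 hq.2), ENNReal.ofReal_natCast]


theorem measureReal_selfNormalized_eq (hmeas : ∀ i, Measurable (X i)) (hindep : iIndepFun X P)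
    {p z : ℝ} (hb : 0 < b) (hq : q ∈ Set.Icc 0 1)
    (hlaw : ∀ i, P.map (X i) = twoPointLaw 0 b q)
    (hp : 1 < p) (hz : 0 < z) {n : ℕ} (hn : ⌈(n : ℝ) * z ^ (p / (p - 1))⌉₊ ≠ 0) :
    P.real {ω | z * (n : ℝ) ^ (1 - 1 / p) * (∑ j ∈ Finset.range n, |X j ω| ^ p) ^ (1 / p)
        ≤ ∑ j ∈ Finset.range n, X j ω}
      = (1 - q) ^ n + ∑ j ∈ Finset.Icc ⌈(n : ℝ) * z ^ (p / (p - 1))⌉₊ n, binomWeight q n j := by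
  set K := ⌈(n : ℝ) * z ^ (p / (p - 1))⌉₊
  have hae : {ω | z * (n : ℝ) ^ (1 - 1 / p) * (∑ j ∈ Finset.range n, |X j ω| ^ p) ^ (1 / p)
        ≤ ∑ j ∈ Finset.range n, X j ω} =ᵐ[P] countValue X b n ⁻¹' ↑(insert 0 (Finset.Icc K n)) := by
    refine Filter.eventuallyEq_set.2 ?_
    filter_upwards [ae_forall_eq_or_eq hmeas hlaw] with ω hω
    have hgood : ∀ i ∈ Finset.range n, X i ω = 0 ∨ X i ω = b := fun i _ => hω i
    have hcount : countValue X b n ω ≤ n :=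
      (Finset.card_filter_le _ _).trans (Finset.card_range n).le
    rw [sum_eq_countValue_mul hgood (f := fun x => |x| ^ p)
      (by simp [(one_pos.trans hp).ne']), sum_eq_countValue_mul hgood (f := fun x => x) rfl,
      abs_of_pos hb, selfNormalized_le_iff hb hz hp]
    simp [Nat.ceil_le, hcount, K]
  have hlawCount := hasLaw_countValue_binomial hmeas hindep hb.ne hq hlaw n
  rw [measureReal_congr hae, ← map_measureReal_apply (measurable_countValue hmeas b n)
    (Finset.measurableSet _), hlawCount.map_eq, ← sum_measureReal_singleton,
    Finset.sum_insert (by simpa using hn), binomial_real_zero]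
  exact congrArg _ (Finset.sum_congr rfl fun j _ => binomial_real_singleton n j _)

end TwoPoint

theorem exact_asymptotics_two_point_a_zero_general
    {Ω : Type*} [MeasurableSpace Ω] (P : Measure Ω)
    (X : ℕ → Ω → ℝ) (hmeas : ∀ i, Measurable (X i))
    (hindep : iIndepFun X P)
    (b q : ℝ) (hb : 0 < b) (hq : q ∈ Set.Ioo (0 : ℝ) 1)
    (hdist : ∀ j, P.map (X j)
      = ENNReal.ofReal q • Measure.dirac b + ENNReal.ofReal (1 - q) • Measure.dirac (0 : ℝ))
    (p : ℝ) (hp : 1 < p)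
    (z : ℝ) (hz1 : crossFn p 0 b q < z) (hz2 : z < 1) :
    Tendsto
      (fun n : ℕ =>
        ((P {ω | z * (n : ℝ) ^ (1 - 1 / p) * (∑ j ∈ Finset.range n, |X j ω| ^ p) ^ (1 / p)
              ≤ ∑ j ∈ Finset.range n, X j ω}).toReal - (1 - q) ^ n)
          / binomQ q n ((⌈(n : ℝ) * z ^ (p / (p - 1))⌉ : ℝ) / n))
      atTop (nhds 1) := by
  obtain ⟨hq0, hq1⟩ := hq
  have hp0 : 0 < p := one_pos.trans hp
  have hexp : 0 < p / (p - 1) := div_pos hp0 (sub_pos.2 hp)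
  rw [crossFn_zero_left hp0.ne' hb hq0] at hz1
  have hz0 : 0 < z := (Real.rpow_pos_of_pos hq0 _).trans hz1
  set t := z ^ (p / (p - 1))
  have hqt : q < t := by
    have := Real.rpow_lt_rpow (by positivity) hz1 hexp
    rwa [← Real.rpow_mul hq0.le, show (1 - 1 / p) * (p / (p - 1)) = 1 by
      field_simp [(sub_pos.2 hp).ne'],
      Real.rpow_one] at this
  have ht1 : t < 1 := Real.rpow_lt_one hz0.le hz2 hexp
  have hK : Tendsto (fun n : ℕ => (⌈(n : ℝ) * t⌉₊ : ℝ) / n) atTop (nhds t) := by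
    simpa only [mul_comm, Function.comp_def] using
      (tendsto_nat_ceil_mul_div_atTop (hq0.trans hqt).le).comp tendsto_natCast_atTop_atTop
  refine (tendsto_sum_Icc_binomWeight_div_binomQ hq0 hqt ht1 hK).congr' ?_
  filter_upwards [(tendsto_atTop_of_tendsto_div_natCast (hq0.trans hqt) hK).eventually_ne_atTop 0]
    with n hn
  rw [← measureReal_def,
    measureReal_selfNormalized_eq hmeas hindep hb ⟨hq0.le, hq1.le⟩ hdist hp hz0 hn,
    add_sub_cancel_left, ← natCast_ceil_eq_intCast_ceil (by positivity)]

/-- **Theorem 3(ii): exact asymptotics, two-point case with `a = 0`.**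
With `t₊ = z^{p/(p−1)}` and `αₙ = ⌈n t₊⌉/n`, one has
`P(Aₙ(z)) = (1−q)ⁿ + (1 + o(1)) · Qₙ(αₙ)` as `n → ∞`. -/
theorem exact_asymptotics_two_point_a_zero
    {Ω : Type*} [MeasurableSpace Ω] (P : Measure Ω) [IsProbabilityMeasure P]
    (X : ℕ → Ω → ℝ) (hmeas : ∀ i, Measurable (X i))
    (hindep : iIndepFun X P)
    (b q : ℝ) (hb : 0 < b) (hq : q ∈ Set.Ioo (0 : ℝ) 1)
    (hdist : ∀ j, P.map (X j)
      = ENNReal.ofReal q • Measure.dirac b + ENNReal.ofReal (1 - q) • Measure.dirac (0 : ℝ))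
    (p : ℝ) (hp : 1 < p)
    (z : ℝ) (hz1 : crossFn p 0 b q < z) (hz2 : z < 1) :
    Tendsto
      (fun n : ℕ =>
        ((P {ω | z * (n : ℝ) ^ (1 - 1 / p) * (∑ j ∈ Finset.range n, |X j ω| ^ p) ^ (1 / p)
              ≤ ∑ j ∈ Finset.range n, X j ω}).toReal - (1 - q) ^ n)
          / binomQ q n ((⌈(n : ℝ) * z ^ (p / (p - 1))⌉ : ℝ) / n))
      atTop (nhds 1) :=
  exact_asymptotics_two_point_a_zero_general P X hmeas hindep b q hb hq hdist p hp z hz1 hz2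
end
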